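/- arXiv:1401.3008 — 5 statements merged into one kernel-verified Lean document; each statement's English description precedes it below -/
import Mathlib

section
/- For any tree T on at least 2 vertices, the strong metric dimension of T equals the number of leaves of T minus one. -/
open SimpleGraph

/-- One step of the zero forcing color-change rule: add every white vertex that is
the unique white neighbor of some black vertex. -/
def zfStep {V : Type*} (G : SimpleGraph V) (B : Set V) : Set V :=
  B ∪ {w | ∃ u ∈ B, G.Adj u w ∧ ∀ x, G.Adj u x → x ∉ B → x = w}

/-- `S` is a zero forcing set if iterating the color-change rule blackens all vertices. -/
def IsZeroForcingSet {V : Type*} (G : SimpleGraph V) (S : Set V) : Prop :=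
  ∃ n : ℕ, (zfStep G)^[n] S = Set.univ

/-- The zero forcing number: minimum cardinality of a zero forcing set. -/
noncomputable def zeroForcingNumber {V : Type*} (G : SimpleGraph V) : ℕ :=
  sInf {n | ∃ S : Set V, S.ncard = n ∧ IsZeroForcingSet G S}

/-- A (finite) graph is a path graph: nonempty, connected, acyclic, max degree ≤ 2. -/
def IsPathGraph {V : Type*} (G : SimpleGraph V) : Prop :=
  Nonempty V ∧ G.Connected ∧ G.IsAcyclic ∧ ∀ v : V, (G.neighborSet v).ncard ≤ 2

/-- The path cover number: minimum number of vertex-disjoint induced paths covering `V`. -/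
noncomputable def pathCoverNumber {V : Type*} (G : SimpleGraph V) : ℕ :=
  sInf {n | ∃ P : Finset (Set V), P.card = n ∧
    (∀ S ∈ P, IsPathGraph (G.induce S)) ∧
    (P : Set (Set V)).PairwiseDisjoint id ∧ ⋃₀ (P : Set (Set V)) = Set.univ}

/-- `u` lies on an `x`–`v` geodesic. -/
def LiesBetween {V : Type*} (G : SimpleGraph V) (x u v : V) : Prop :=
  G.dist x u + G.dist u v = G.dist x v

/-- `x` strongly resolves the pair `u, v`. -/
def StronglyResolves {V : Type*} (G : SimpleGraph V) (x u v : V) : Prop :=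
  LiesBetween G x u v ∨ LiesBetween G x v u

/-- `W` is a strong resolving set of `G`. -/
def IsStrongResolvingSet {V : Type*} (G : SimpleGraph V) (W : Set V) : Prop :=
  ∀ u v : V, u ≠ v → ∃ x ∈ W, StronglyResolves G x u v

/-- The strong metric dimension: minimum cardinality of a strong resolving set. -/
noncomputable def sdim {V : Type*} (G : SimpleGraph V) : ℕ :=
  sInf {n | ∃ W : Set V, W.ncard = n ∧ IsStrongResolvingSet G W}

/-- A leaf is a vertex of degree one. -/
def IsLeaf {V : Type*} (G : SimpleGraph V) (v : V) : Prop :=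
  (G.neighborSet v).ncard = 1

/-- `σ(G)`: the number of leaves of `G`. -/
noncomputable def leafCount {V : Type*} (G : SimpleGraph V) : ℕ :=
  {v | IsLeaf G v}.ncard

/-
A leaf lies on no geodesic between two other vertices, so a pair of leaves is strongly resolved
only by one of its members: a strong resolving set misses at most one leaf. Conversely, in a tree
every geodesic from `v` through `u` extends beyond `u` to a leaf, so each pair `u ≠ v` yields
distinct leaves `x, x'` with `u` on an `x`–`v` geodesic and `v` on an `x'`–`u` geodesic; a set
missing at most one leaf contains one of them.
-/

section

variable {V : Type*} {G : SimpleGraph V} {u v w x y z : V}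

theorem IsLeaf.eq_of_adj (hu : IsLeaf G u) (hw : G.Adj u w) (hz : G.Adj u z) : z = w := by
  obtain ⟨a, ha⟩ := Set.ncard_eq_one.mp hu
  have hw' : w ∈ G.neighborSet u := hw
  have hz' : z ∈ G.neighborSet u := hz
  rw [ha] at hw' hz'
  exact hz'.trans hw'.symm

theorem IsLeaf.exists_adj (hu : IsLeaf G u) : ∃ w, G.Adj u w :=
  Set.nonempty_of_ncard_ne_zero (s := G.neighborSet u) (hu.symm ▸ one_ne_zero)

theorem SimpleGraph.Connected.dist_isLeaf_eq (hG : G.Connected) (hu : IsLeaf G u)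
    (hw : G.Adj u w) (hy : y ≠ u) : G.dist y u = G.dist y w + 1 := by
  obtain ⟨p, -, hp⟩ := hG.exists_path_of_dist u y
  cases p with
  | nil => exact absurd rfl hy
  | cons h q =>
    have hw' := (hu.eq_of_adj hw h).symm
    subst hw'
    have hq : G.dist w y ≤ q.length := dist_le q
    have hwu : G.dist w u = 1 := dist_eq_one_iff_adj.mpr hw.symm
    have := hG.dist_triangle (u := y) (v := w) (w := u)
    rw [Walk.length_cons, G.dist_comm] at hp
    rw [G.dist_comm (u := w)] at hq
    omega

theorem SimpleGraph.Connected.eq_of_liesBetween_of_isLeaf (hG : G.Connected) (hu : IsLeaf G u)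
    (huv : u ≠ v) (h : LiesBetween G x u v) : x = u := by
  -- otherwise the geodesic would enter and leave `u` through its only neighbour `w`
  by_contra hxu
  obtain ⟨w, hw⟩ := hu.exists_adj
  have hx := hG.dist_isLeaf_eq hu hw hxu
  have hv := hG.dist_isLeaf_eq hu hw huv.symm
  have := hG.dist_triangle (u := x) (v := w) (w := v)
  have := G.dist_comm (u := u) (v := v)
  have := G.dist_comm (u := w) (v := v)
  unfold LiesBetween at h
  omega

theorem SimpleGraph.Connected.eq_of_liesBetween_of_liesBetween (hG : G.Connected)
    (huv : LiesBetween G x u v) (hvu : LiesBetween G x v u) : u = v := by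
  have := G.dist_comm (u := u) (v := v)
  unfold LiesBetween at huv hvu
  exact hG.dist_eq_zero_iff.mp (by omega)

theorem SimpleGraph.Connected.subsingleton_leaves_sdiff (hG : G.Connected) {W : Set V}
    (hW : IsStrongResolvingSet G W) : ({v | IsLeaf G v} \ W).Subsingleton := by
  rintro u ⟨hu, huW⟩ v ⟨hv, hvW⟩
  by_contra huv
  obtain ⟨x, hxW, hx | hx⟩ := hW u v huv
  · exact huW (hG.eq_of_liesBetween_of_isLeaf hu huv hx ▸ hxW)
  · exact hvW (hG.eq_of_liesBetween_of_isLeaf hv (Ne.symm huv) hx ▸ hxW)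

theorem SimpleGraph.IsTree.eq_of_adj_of_dist_le (hG : G.IsTree) (hy : G.Adj x y) (hz : G.Adj x z)
    (hyv : G.dist y v ≤ G.dist x v) (hzv : G.dist z v ≤ G.dist x v) : y = z := by
  classical
  have geodesic_through {y : V} (hy : G.Adj x y) (hyv : G.dist y v ≤ G.dist x v) :
      ∃ q : G.Walk y v, (Walk.cons hy q).IsPath := by
    obtain ⟨q, hq, hql⟩ := hG.connected.exists_path_of_dist y v
    refine ⟨q, (Walk.cons_isPath_iff hy q).mpr ⟨hq, fun hx => ?_⟩⟩
    have := dist_le (q.takeUntil x hx)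
    have := dist_le (q.dropUntil x hx)
    have := hG.connected.pos_dist_of_ne hy.ne.symm
    have := congrArg Walk.length (q.take_spec hx)
    rw [Walk.length_append] at this
    omega
  -- `x, y, …, v` and `x, z, …, v` are two paths, which coincide in a tree
  obtain ⟨q, hq⟩ := geodesic_through hy hyv
  obtain ⟨q', hq'⟩ := geodesic_through hz hzv
  have := congrArg Subtype.val ((hG.isAcyclic.subsingleton_path x v).elim ⟨_, hq⟩ ⟨_, hq'⟩)
  simp only [Walk.cons.injEq] at this
  exact this.1

theorem SimpleGraph.IsTree.exists_adj_dist_gt (hG : G.IsTree) (hx : ¬IsLeaf G x) (hxv : x ≠ v) :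
    ∃ y, G.Adj x y ∧ G.dist x v < G.dist y v := by
  have hne : (G.neighborSet x).Nonempty :=
    ⟨_, (hG.connected.preconnected x v).some.adj_snd (Walk.not_nil_of_ne hxv)⟩
  obtain ⟨a, ha, b, hb, hab⟩ : (G.neighborSet x).Nontrivial := by
    refine Set.not_subsingleton_iff.mp fun hs => hx ?_
    obtain ⟨a, ha⟩ := hne
    exact Set.ncard_eq_one.mpr ⟨a, hs.eq_singleton_of_mem ha⟩
  by_contra! hclose
  exact hab (hG.eq_of_adj_of_dist_le ha hb (hclose a ha) (hclose b hb))

theorem SimpleGraph.IsTree.exists_isLeaf_liesBetween [Finite V] (hG : G.IsTree) (huv : u ≠ v) :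
    ∃ x, IsLeaf G x ∧ LiesBetween G x u v := by
  obtain ⟨x, hx, hmax⟩ := Set.exists_max_image {x | LiesBetween G x u v} (G.dist · v)
    (Set.toFinite _) ⟨u, by simp [LiesBetween]⟩
  -- a non-leaf `x` could be pushed one step further away from `v`
  refine ⟨x, by_contra fun hleaf => ?_, hx⟩
  have hxv : x ≠ v := by
    rintro rfl
    exact huv (hG.connected.eq_of_liesBetween_of_liesBetween hx (by simp [LiesBetween]))
  obtain ⟨y, hxy, hyv⟩ := hG.exists_adj_dist_gt hleaf hxv
  have hy : LiesBetween G y u v := by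
    have hyx : G.dist y x = 1 := dist_eq_one_iff_adj.mpr hxy.symm
    have := hG.connected.dist_triangle (u := y) (v := x) (w := u)
    have := hG.connected.dist_triangle (u := y) (v := u) (w := v)
    simp only [Set.mem_ofPred_eq, LiesBetween] at hx ⊢
    omega
  exact (hmax y hy).not_gt hyv

theorem SimpleGraph.IsTree.isStrongResolvingSet_iff [Finite V] (hG : G.IsTree) {W : Set V} :
    IsStrongResolvingSet G W ↔ ({v | IsLeaf G v} \ W).Subsingleton := by
  refine ⟨hG.connected.subsingleton_leaves_sdiff, fun hW u v huv => ?_⟩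
  obtain ⟨x, hx, hxuv⟩ := hG.exists_isLeaf_liesBetween huv
  obtain ⟨x', hx', hxvu⟩ := hG.exists_isLeaf_liesBetween huv.symm
  have hxx' : x ≠ x' := by
    rintro rfl
    exact huv (hG.connected.eq_of_liesBetween_of_liesBetween hxuv hxvu)
  by_cases hxW : x ∈ W
  · exact ⟨x, hxW, .inl hxuv⟩
  · exact ⟨x', by_contra fun hx'W => hxx' (hW ⟨hx, hxW⟩ ⟨hx', hx'W⟩), .inr hxvu⟩

theorem Set.sInf_ncard_subsingleton_sdiff {α : Type*} [Finite α] (s : Set α) :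
    sInf {n | ∃ t : Set α, t.ncard = n ∧ (s \ t).Subsingleton} = s.ncard - 1 := by
  obtain ⟨t, hts, ht⟩ := s.exists_subset_card_eq (n := s.ncard - 1) (Nat.sub_le _ _)
  have hst : (s \ t).Subsingleton := by
    rw [← Set.ncard_le_one_iff_subsingleton, Set.ncard_sdiff hts, ht]
    omega
  refine le_antisymm (Nat.sInf_le ⟨t, ht, hst⟩) (le_csInf ⟨_, t, ht, hst⟩ ?_)
  rintro _ ⟨t', rfl, ht'⟩
  have := s.ncard_le_ncard_sdiff_add_ncard t'
  have := Set.ncard_le_one_iff_subsingleton.mpr ht'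
  omega

end

theorem sdim_tree_eq_leafCount_sub_one_general {V : Type*} [Fintype V]
    (T : SimpleGraph V) (hT : T.IsTree) :
    sdim T = leafCount T - 1 := by
  simp only [sdim, hT.isStrongResolvingSet_iff]
  exact Set.sInf_ncard_subsingleton_sdiff _

/-- For any tree on at least 2 vertices, the strong metric dimension equals
the number of leaves minus one. -/
theorem sdim_tree_eq_leafCount_sub_one {V : Type*} [Fintype V]
    (T : SimpleGraph V) (hT : T.IsTree) (h2 : 2 ≤ Fintype.card V) :
    sdim T = leafCount T - 1 :=
  sdim_tree_eq_leafCount_sub_one_general T hT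
end

section
/- Let G be a connected graph with a cut-vertex v, let V_1,...,V_k be the vertex sets of the connected components of G − v, and let G_i be the subgraph induced by V_i ∪ {v}. Then Z(G) ≥ (Σ_{i=1}^k Z(G_i)) − k + 1. -/
open SimpleGraph

lemma zfStep_subset {V : Type*} (G : SimpleGraph V) (B : Set V) : B ⊆ zfStep G B :=
  Set.subset_union_left

lemma zfStep_mono {V : Type*} (G : SimpleGraph V) {B B' : Set V} (h : B ⊆ B') :
    zfStep G B ⊆ zfStep G B' := by
  rintro w (hw | ⟨u, hu, hadj, huniq⟩)
  · exact Or.inl (h hw)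
  · by_cases hwB : w ∈ B'
    · exact Or.inl hwB
    · exact Or.inr ⟨u, h hu, hadj, fun x hx hxB => huniq x hx fun hxB' => hxB (h hxB')⟩

lemma zf_sim {W : Type*} (H : SimpleGraph W) (T : ℕ → Set W)
    (hstep : ∀ t, T (t + 1) ⊆ zfStep H (T t)) :
    ∀ t, T t ⊆ (zfStep H)^[t] (T 0) := by
  intro t
  induction t with
  | zero => exact subset_rfl
  | succ t ih =>
    rw [Function.iterate_succ_apply']
    exact (hstep t).trans (zfStep_mono H ih)

lemma zfn_le {V : Type*} (G : SimpleGraph V) (S : Set V) (h : IsZeroForcingSet G S) :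
    zeroForcingNumber G ≤ S.ncard :=
  Nat.sInf_le ⟨S, rfl, h⟩

lemma sum_ncard_le {V : Type*} [Fintype V] {k : ℕ} (D : Fin k → Set V)
    (hdisj : Pairwise (Function.onFun Disjoint D)) (T : Set V) (hsub : ∀ i, D i ⊆ T) :
    ∑ i, (D i).ncard ≤ T.ncard := by
  classical
  have h1 : ∀ i, (D i).ncard = (D i).toFinset.card := fun i => Set.ncard_eq_toFinset_card' _
  have h2 : T.ncard = T.toFinset.card := Set.ncard_eq_toFinset_card' _
  simp only [h1, h2]
  rw [← Finset.card_biUnion (fun i _ j _ hij => Set.disjoint_toFinset.mpr (hdisj hij))]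
  apply Finset.card_le_card
  intro a ha
  simp only [Finset.mem_biUnion, Set.mem_toFinset] at ha ⊢
  obtain ⟨i, _, hai⟩ := ha
  exact hsub i hai

/-- Cut-vertex bound for the zero forcing number:
`Z(G) ≥ (∑ Z(G_i)) − k + 1`, stated additively to avoid natural subtraction. -/
theorem zeroForcingNumber_cut_vertex {V : Type*} [Fintype V]
    (G : SimpleGraph V) (hG : G.Connected) (v : V) (k : ℕ) (hk : 2 ≤ k)
    (C : Fin k → Set V)
    (hne : ∀ i, (C i).Nonempty)
    (hdisj : Pairwise (Function.onFun Disjoint C))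
    (hmem : ∀ x : V, x ≠ v ↔ ∃ i, x ∈ C i)
    (hconn : ∀ i, (G.induce (C i)).Connected)
    (hsep : ∀ i j, i ≠ j → ∀ a ∈ C i, ∀ b ∈ C j, ¬ G.Adj a b) :
    (∑ i, zeroForcingNumber (G.induce (C i ∪ {v}))) + 1 ≤ zeroForcingNumber G + k := by
  classical
  have hBne : {n | ∃ S : Set V, S.ncard = n ∧ IsZeroForcingSet G S}.Nonempty :=
    ⟨(Set.univ : Set V).ncard, Set.univ, rfl, 0, rfl⟩
  obtain ⟨B, hBcard, n, hBn⟩ := Nat.sInf_mem hBne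
  set F : ℕ → Set V := fun t => (zfStep G)^[t] B with hF
  have hFsucc : ∀ t, F (t + 1) = zfStep G (F t) := fun t =>
    Function.iterate_succ_apply' _ _ _
  have hFmono : Monotone F :=
    monotone_nat_of_le_succ (fun t => by rw [hFsucc]; exact zfStep_subset G (F t))
  have hFn : F n = Set.univ := hBn
  have hvC : ∀ i, v ∉ C i := fun i hv => (hmem v).mpr ⟨i, hv⟩ rfl
  -- Key bound valid for every component
  have key1 : ∀ i : Fin k,
      zeroForcingNumber (G.induce (C i ∪ {v})) ≤ (B ∩ C i).ncard + 1 := by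
    intro i
    set s : Set V := C i ∪ {v} with hs
    set T : ℕ → Set ↑s := fun t => {x : ↑s | (↑x : V) ∈ F t ∨ (↑x : V) = v} with hT
    have hstep : ∀ t, T (t + 1) ⊆ zfStep (G.induce s) (T t) := by
      intro t x hx
      rcases hx with hx | hxv
      swap
      · exact Or.inl (Or.inr hxv)
      by_cases hxveq : (↑x : V) = v
      · exact Or.inl (Or.inr hxveq)
      by_cases hxt : (↑x : V) ∈ F t
      · exact Or.inl (Or.inl hxt)
      have hxCi : (↑x : V) ∈ C i := by
        rcases x.2 with h | h
        · exact h
        · exact absurd h hxveq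
      rw [hFsucc] at hx
      rcases hx with hx | ⟨u, hu, hadj, huniq⟩
      · exact absurd hx hxt
      have huv : u ∈ s := by
        by_cases huveq : u = v
        · exact Or.inr (by simp [huveq])
        · obtain ⟨j, hj⟩ := (hmem u).mp huveq
          rcases eq_or_ne j i with rfl | hne'
          · exact Or.inl hj
          · exact absurd hadj (hsep j i hne' u hj (↑x) hxCi)
      refine Or.inr ⟨⟨u, huv⟩, Or.inl hu, hadj, ?_⟩
      rintro ⟨y, hy⟩ hady hynot
      have hyF : y ∉ F t := fun h => hynot (Or.inl h)
      exact Subtype.ext (huniq y hady hyF)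
    have hzfs : IsZeroForcingSet (G.induce s) (T 0) := by
      refine ⟨n, Set.eq_univ_of_univ_subset ?_⟩
      intro x _
      apply zf_sim (G.induce s) T hstep n
      have : (↑x : V) ∈ F n := by rw [hFn]; trivial
      exact Or.inl this
    have hcard : (T 0).ncard ≤ (B ∩ C i).ncard + 1 := by
      have himg : Subtype.val '' (T 0) ⊆ (B ∩ C i) ∪ {v} := by
        rintro a ⟨x, hx, rfl⟩
        rcases hx with hxB | hxv
        · rcases x.2 with h | h
          · exact Or.inl ⟨hxB, h⟩
          · exact Or.inr h
        · exact Or.inr hxv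
      calc (T 0).ncard = (Subtype.val '' (T 0)).ncard :=
            (Set.ncard_image_of_injective _ Subtype.coe_injective).symm
        _ ≤ ((B ∩ C i) ∪ {v}).ncard := Set.ncard_le_ncard himg (Set.toFinite _)
        _ ≤ (B ∩ C i).ncard + 1 := by
            simpa using Set.ncard_union_le (B ∩ C i) {v}
    exact (zfn_le _ _ hzfs).trans hcard
  have hsum : ∑ i, (B ∩ C i).ncard ≤ B.ncard :=
    sum_ncard_le _ (fun i j hij =>
        (hdisj hij).mono Set.inter_subset_right Set.inter_subset_right)
      B (fun i => Set.inter_subset_left)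
  by_cases hvB : v ∈ B
  · -- v is in the optimal set
    have hsum' : ∑ i, (B ∩ C i).ncard ≤ (B \ {v}).ncard :=
      sum_ncard_le _ (fun i j hij =>
          (hdisj hij).mono Set.inter_subset_right Set.inter_subset_right)
        (B \ {v}) (fun i x hx => ⟨hx.1, fun h => hvC i (h ▸ hx.2)⟩)
    have hdiff : (B \ {v}).ncard + 1 = B.ncard :=
      Set.ncard_diff_singleton_add_one hvB
    have htot : ∑ i, zeroForcingNumber (G.induce (C i ∪ {v})) ≤
        (∑ i, (B ∩ C i).ncard) + k := by
      calc ∑ i, zeroForcingNumber (G.induce (C i ∪ {v}))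
          ≤ ∑ i, ((B ∩ C i).ncard + 1) := Finset.sum_le_sum (fun i _ => key1 i)
        _ = (∑ i, (B ∩ C i).ncard) + k := by
            rw [Finset.sum_add_distrib, Finset.sum_const, Finset.card_univ]
            simp
    have hZ : B.ncard = zeroForcingNumber G := hBcard
    omega
  · -- v is not in the optimal set: find when v gets forced
    have hex : ∃ t, v ∈ F (t + 1) := by
      rcases n with _ | n'
      · exact absurd (hFn ▸ Set.mem_univ v : v ∈ F 0) hvB
      · exact ⟨n', by rw [hFn]; trivial⟩
    set t0 := Nat.find hex with ht0
    have hvt1 : v ∈ F (t0 + 1) := Nat.find_spec hex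
    have hvt0 : v ∉ F t0 := by
      intro hv
      have h1 : t0 ≠ 0 := by intro h; rw [h] at hv; exact hvB hv
      have h2 := Nat.find_min hex (m := t0 - 1) (by omega)
      exact h2 (by rw [(by omega : t0 - 1 + 1 = t0)]; exact hv)
    rw [hFsucc] at hvt1
    rcases hvt1 with h | ⟨u, huF, huadj, huuniq⟩
    · exact absurd h hvt0
    have huvne : u ≠ v := huadj.ne
    obtain ⟨m, hm⟩ := (hmem u).mp huvne
    -- component m forces v itself: no +1 needed
    have key2 : zeroForcingNumber (G.induce (C m ∪ {v})) ≤ (B ∩ C m).ncard := by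
      set s : Set V := C m ∪ {v} with hs
      set T : ℕ → Set ↑s := fun t => {x : ↑s | (↑x : V) ∈ F t} with hT
      have hstep : ∀ t, T (t + 1) ⊆ zfStep (G.induce s) (T t) := by
        intro t x hx
        by_cases hxt : (↑x : V) ∈ F t
        · exact Or.inl hxt
        by_cases hxveq : (↑x : V) = v
        · -- x is v, forced at time t0 exactly
          have hteq : t = t0 := by
            have h1 : t0 ≤ t := Nat.find_le (hxveq ▸ hx)
            by_contra hne'
            have h2 : t0 + 1 ≤ t := by omega
            exact hxt (hxveq ▸ hFmono h2 (Nat.find_spec hex))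
          subst hteq
          have humem : u ∈ s := Or.inl hm
          refine Or.inr ⟨⟨u, humem⟩, huF, ?_, ?_⟩
          · show G.Adj u ↑x
            rw [hxveq]; exact huadj
          · rintro ⟨y, hy⟩ hady hynot
            exact Subtype.ext ((huuniq y hady hynot).trans hxveq.symm)
        · -- x in C m, forced within the component
          have hxCi : (↑x : V) ∈ C m := by
            rcases x.2 with h | h
            · exact h
            · exact absurd h hxveq
          have hx' : (↑x : V) ∈ F (t + 1) := hx
          rw [hFsucc] at hx'
          rcases hx' with hx' | ⟨u', hu', hadj', huniq'⟩
          · exact absurd hx' hxt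
          have huv : u' ∈ s := by
            by_cases huveq : u' = v
            · exact Or.inr (by simp [huveq])
            · obtain ⟨j, hj⟩ := (hmem u').mp huveq
              rcases eq_or_ne j m with rfl | hne'
              · exact Or.inl hj
              · exact absurd hadj' (hsep j m hne' u' hj (↑x) hxCi)
          refine Or.inr ⟨⟨u', huv⟩, hu', hadj', ?_⟩
          rintro ⟨y, hy⟩ hady hynot
          exact Subtype.ext (huniq' y hady hynot)
      have hzfs : IsZeroForcingSet (G.induce s) (T 0) := by
        refine ⟨n, Set.eq_univ_of_univ_subset ?_⟩
        intro x _
        apply zf_sim (G.induce s) T hstep n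
        show (↑x : V) ∈ F n
        rw [hFn]; trivial
      have hcard : (T 0).ncard ≤ (B ∩ C m).ncard := by
        have himg : Subtype.val '' (T 0) ⊆ B ∩ C m := by
          rintro a ⟨x, hx, rfl⟩
          have hxB : (↑x : V) ∈ B := hx
          refine ⟨hxB, ?_⟩
          rcases x.2 with h | h
          · exact h
          · exact absurd (h ▸ hxB) hvB
        calc (T 0).ncard = (Subtype.val '' (T 0)).ncard :=
              (Set.ncard_image_of_injective _ Subtype.coe_injective).symm
          _ ≤ (B ∩ C m).ncard := Set.ncard_le_ncard himg (Set.toFinite _)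
      exact (zfn_le _ _ hzfs).trans hcard
    -- assemble
    have hsplit : ∑ i, zeroForcingNumber (G.induce (C i ∪ {v})) ≤
        (∑ i, (B ∩ C i).ncard) + (k - 1) := by
      rw [← Finset.add_sum_erase _ _ (Finset.mem_univ m),
        ← Finset.add_sum_erase _ (fun i => (B ∩ C i).ncard) (Finset.mem_univ m)]
      have h1 : ∑ i ∈ Finset.univ.erase m, zeroForcingNumber (G.induce (C i ∪ {v})) ≤
          ∑ i ∈ Finset.univ.erase m, ((B ∩ C i).ncard + 1) :=
        Finset.sum_le_sum (fun i _ => key1 i)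
      have h2 : ∑ i ∈ Finset.univ.erase m, ((B ∩ C i).ncard + 1) =
          (∑ i ∈ Finset.univ.erase m, (B ∩ C i).ncard) + (k - 1) := by
        rw [Finset.sum_add_distrib, Finset.sum_const, Finset.card_erase_of_mem
          (Finset.mem_univ m), Finset.card_univ]
        simp
      omega
    have hZ : B.ncard = zeroForcingNumber G := hBcard
    omega
end

section
/- For any tree T, the zero forcing number of T is at most the strong metric dimension of T, i.e., Z(T) ≤ sdim(T). -/
open SimpleGraph

/-! A strong resolving set `W` of a tree contains every leaf except possibly one, `ℓ`: a pair of
leaves is strongly resolved only by one of its own members, since no geodesic passes through a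
leaf. Such a `W` is zero forcing. Root the tree at `ℓ` and take a white vertex `w` of maximal
depth among those left white once forcing stops. A child `b` of `w` would be black with every
other neighbour a child of its own, so `b` would force `w`; hence `w` is childless, i.e. a leaf
other than `ℓ` (and so in `W`), or the root of a one-vertex tree. -/

namespace SimpleGraph

variable {V : Type*} {G : SimpleGraph V}

lemma Reachable.exists_adj_dist_add_one_eq {ℓ z : V} (h : G.Reachable ℓ z) (hz : z ≠ ℓ) :
    ∃ p, G.Adj p z ∧ G.dist ℓ p + 1 = G.dist ℓ z := by
  obtain ⟨q, hq⟩ := h.exists_walk_length_eq_dist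
  have hq_nil : ¬ q.Nil := Walk.not_nil_of_ne hz.symm
  have hadj := Walk.adj_penultimate hq_nil
  refine ⟨q.penultimate, hadj, le_antisymm ?_ ?_⟩
  · have hdrop : G.dist ℓ q.penultimate ≤ q.length - 1 :=
      q.length_dropLast ▸ dist_le q.dropLast
    have hpos : q.length ≠ 0 := fun h0 => hq_nil (Walk.length_eq_zero_iff.mp h0)
    omega
  · calc G.dist ℓ z ≤ G.dist ℓ q.penultimate + G.dist q.penultimate z :=
          hadj.reachable.dist_triangle_right ℓ
      _ = G.dist ℓ q.penultimate + 1 := by rw [dist_eq_one_iff_adj.mpr hadj]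

lemma IsTree.eq_of_adj_of_dist_add_one_eq (hG : G.IsTree) {ℓ b x y : V} (hx : G.Adj x b)
    (hy : G.Adj y b) (hdx : G.dist ℓ x + 1 = G.dist ℓ b)
    (hdy : G.dist ℓ y + 1 = G.dist ℓ b) : x = y := by
  have geodesic_through : ∀ z, G.Adj z b → G.dist ℓ z + 1 = G.dist ℓ b →
      ∃ p : G.Walk ℓ b, p.IsPath ∧ p.penultimate = z := by
    intro z hz hdz
    obtain ⟨q, hq⟩ := (hG.connected ℓ z).exists_walk_length_eq_dist
    exact ⟨q.concat hz, (q.concat hz).isPath_of_length_eq_dist (by simp [hq, hdz]),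
      Walk.penultimate_concat q hz⟩
  obtain ⟨p, hp, rfl⟩ := geodesic_through x hx hdx
  obtain ⟨q, hq, rfl⟩ := geodesic_through y hy hdy
  rw [(hG.existsUnique_path ℓ b).unique hp hq]

end SimpleGraph

section

variable {V : Type*} {G : SimpleGraph V}

lemma IsLeaf.eq_of_adj_s3 {u x y : V} (hu : IsLeaf G u) (hx : G.Adj u x) (hy : G.Adj u y) :
    x = y := by
  obtain ⟨a, ha⟩ := Set.ncard_eq_one.mp hu
  have hx' : x ∈ G.neighborSet u := hx
  have hy' : y ∈ G.neighborSet u := hy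
  rw [ha, Set.mem_singleton_iff] at hx' hy'
  rw [hx', hy']

lemma isLeaf_of_forall_adj_eq {u p : V} (hp : G.Adj u p) (h : ∀ y, G.Adj u y → y = p) :
    IsLeaf G u :=
  Set.ncard_eq_one.mpr ⟨p, Set.eq_singleton_iff_unique_mem.mpr ⟨hp, h⟩⟩

lemma LiesBetween.eq_of_isLeaf (hG : G.Connected) {x u v : V} (hu : IsLeaf G u) (hvu : v ≠ u)
    (h : LiesBetween G x u v) : x = u := by
  by_contra hxu
  obtain ⟨p, hpu, hxp⟩ := (hG x u).exists_adj_dist_add_one_eq (Ne.symm hxu)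
  obtain ⟨p', hp'u, hvp'⟩ := (hG v u).exists_adj_dist_add_one_eq (Ne.symm hvu)
  obtain rfl := hu.eq_of_adj_s3 hpu.symm hp'u.symm
  have htri : G.dist x v ≤ G.dist x p + G.dist v p := by
    rw [dist_comm (u := v)]
    exact hG.dist_triangle
  rw [LiesBetween, dist_comm (u := u)] at h
  omega

lemma StronglyResolves.eq_or_eq_of_isLeaf (hG : G.Connected) {x u v : V} (hu : IsLeaf G u)
    (hv : IsLeaf G v) (huv : u ≠ v) (h : StronglyResolves G x u v) : x = u ∨ x = v :=
  h.imp (·.eq_of_isLeaf hG hu huv.symm) (·.eq_of_isLeaf hG hv huv)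

variable (G) in
lemma isStrongResolvingSet_univ : IsStrongResolvingSet G Set.univ :=
  fun u _ _ => ⟨u, trivial, Or.inl (by simp [LiesBetween])⟩

lemma IsStrongResolvingSet.exists_forall_isLeaf_mem (hG : G.Connected) {W : Set V}
    (hW : IsStrongResolvingSet G W) :
    ∃ ℓ, ∀ v, IsLeaf G v → v ≠ ℓ → v ∈ W := by
  rcases em (∃ ℓ, IsLeaf G ℓ ∧ ℓ ∉ W) with ⟨ℓ, hℓ, hℓW⟩ | hall
  swap
  · exact ⟨hG.nonempty.some, fun v hv _ => by_contra fun hvW => hall ⟨v, hv, hvW⟩⟩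
  refine ⟨ℓ, fun v hv hvℓ => ?_⟩
  obtain ⟨x, hxW, hx⟩ := hW ℓ v hvℓ.symm
  rcases hx.eq_or_eq_of_isLeaf hG hℓ hv hvℓ.symm with rfl | rfl
  · exact absurd hxW hℓW
  · exact hxW

variable (G) in
lemma exists_isStrongResolvingSet_ncard_eq_sdim :
    ∃ W : Set V, W.ncard = sdim G ∧ IsStrongResolvingSet G W :=
  Nat.sInf_mem (s := {n | ∃ W : Set V, W.ncard = n ∧ IsStrongResolvingSet G W})
    ⟨_, Set.univ, rfl, isStrongResolvingSet_univ G⟩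

lemma zeroForcingNumber_le_ncard {S : Set V} (hS : IsZeroForcingSet G S) :
    zeroForcingNumber G ≤ S.ncard :=
  Nat.sInf_le ⟨S, rfl, hS⟩

variable (G) in
lemma subset_zfStep (B : Set V) : B ⊆ zfStep G B :=
  Set.subset_union_left

lemma isZeroForcingSet_of_forall_zfStep_eq [Finite V] {S : Set V}
    (h : ∀ B, S ⊆ B → zfStep G B = B → B = Set.univ) : IsZeroForcingSet G S := by
  have hinfl : id ≤ zfStep G := subset_zfStep G
  let chain : ℕ →o Set V :=
    ⟨fun k => (zfStep G)^[k] S, monotone_nat_of_le_succ fun k => by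
      rw [Function.iterate_succ_apply']
      exact subset_zfStep G _⟩
  obtain ⟨n, hn⟩ := WellFoundedGT.monotone_chain_condition chain
  refine ⟨n, h _ (Function.id_le_iterate_of_id_le hinfl n S) ?_⟩
  have hstable := hn (n + 1) n.le_succ
  simp only [chain, OrderHom.coe_mk, Function.iterate_succ_apply'] at hstable
  exact hstable.symm

lemma SimpleGraph.IsTree.eq_univ_of_zfStep_eq [Finite V] [Nontrivial V] (hG : G.IsTree)
    {ℓ : V} {B : Set V} (hB : ∀ v, IsLeaf G v → v ≠ ℓ → v ∈ B)
    (hfix : zfStep G B = B) : B = Set.univ := by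
  by_contra hne
  obtain ⟨w, hw, hmax⟩ := Set.exists_max_image Bᶜ (G.dist ℓ) (Set.toFinite _)
    (Set.nonempty_compl.mpr hne)
  have no_child : ∀ b, G.Adj w b → G.dist ℓ b ≠ G.dist ℓ w + 1 := by
    intro b hwb hb
    have hbB : b ∈ B := by_contra fun hbB => absurd (hmax b hbB) (by omega)
    refine hw (hfix ▸ Or.inr ⟨b, hbB, hwb.symm, fun x hbx hxB => ?_⟩)
    have hx := hmax x hxB
    have hxb := hG.dist_eq_dist_add_one_of_adj ℓ hbx
    exact hG.eq_of_adj_of_dist_add_one_eq (ℓ := ℓ) hbx.symm hwb (by omega) (by omega)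
  have all_parents : ∀ y, G.Adj w y → G.dist ℓ y + 1 = G.dist ℓ w := fun y hwy =>
    ((hG.dist_eq_dist_add_one_of_adj ℓ hwy).resolve_right (no_child y hwy)).symm
  by_cases hwℓ : w = ℓ
  · subst hwℓ
    obtain ⟨z, hzw⟩ := exists_ne w
    obtain ⟨p, hpw, -⟩ := (hG.connected z w).exists_adj_dist_add_one_eq hzw.symm
    exact absurd (all_parents p hpw.symm) (by simp)
  · obtain ⟨p, hpw, hp⟩ := (hG.connected ℓ w).exists_adj_dist_add_one_eq hwℓ
    refine hw (hB w (isLeaf_of_forall_adj_eq hpw.symm fun y hwy => ?_) hwℓ)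
    exact hG.eq_of_adj_of_dist_add_one_eq hwy.symm hpw (all_parents y hwy) hp

end

/-- For any tree, the zero forcing number is at most the strong metric dimension. -/
theorem zeroForcingNumber_le_sdim_of_tree {V : Type*} [Fintype V]
    (T : SimpleGraph V) (hT : T.IsTree) (h2 : 2 ≤ Fintype.card V) :
    zeroForcingNumber T ≤ sdim T := by
  have : Nontrivial V := Fintype.one_lt_card_iff_nontrivial.mp h2
  obtain ⟨W, hWcard, hW⟩ := exists_isStrongResolvingSet_ncard_eq_sdim T
  obtain ⟨ℓ, hℓ⟩ := hW.exists_forall_isLeaf_mem hT.connected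
  rw [← hWcard]
  exact zeroForcingNumber_le_ncard <| isZeroForcingSet_of_forall_zfStep_eq fun B hWB hfix =>
    hT.eq_univ_of_zfStep_eq (fun v hv hvℓ => hWB (hℓ v hv hvℓ)) hfix
end

section
/- If x and y are mutually maximally distant vertices of a connected graph G, then every strong resolving set of G contains x or y. -/
open SimpleGraph

/-- `x` is maximally distant from `y`. -/
def MaximallyDistantFrom {V : Type*} (G : SimpleGraph V) (x y : V) : Prop :=
  ∀ z, G.Adj x z → G.dist z y ≤ G.dist x y

/-- `x` and `y` are mutually maximally distant. -/
def MutuallyMaximallyDistant {V : Type*} (G : SimpleGraph V) (x y : V) : Prop :=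
  MaximallyDistantFrom G x y ∧ MaximallyDistantFrom G y x


private lemma exists_adj_dist_aux {V : Type*} (G : SimpleGraph V) (hG : G.Connected)
    {x w : V} (hxw : x ≠ w) :
    ∃ z, G.Adj x z ∧ G.dist z w + 1 = G.dist x w := by
  obtain ⟨p, hp⟩ := (hG x w).exists_walk_length_eq_dist
  cases p with
  | nil => exact absurd rfl hxw
  | cons ha q =>
    refine ⟨_, ha, le_antisymm ?_ ?_⟩
    · have h1 : G.dist _ w ≤ q.length := SimpleGraph.dist_le q
      simp only [SimpleGraph.Walk.length_cons] at hp
      omega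
    · have h2 : G.dist x w ≤ (SimpleGraph.Walk.cons ha
        ((hG _ w).exists_walk_length_eq_dist.choose)).length := SimpleGraph.dist_le _
      simpa [(hG _ w).exists_walk_length_eq_dist.choose_spec] using h2

/-- Every strong resolving set contains one of any two mutually maximally distant vertices. -/
theorem mem_of_mutuallyMaximallyDistant {V : Type*} [Fintype V]
    (G : SimpleGraph V) (hG : G.Connected) (x y : V) (hxy : x ≠ y)
    (h : MutuallyMaximallyDistant G x y)
    (W : Set V) (hW : IsStrongResolvingSet G W) :
    x ∈ W ∨ y ∈ W := by
  by_contra hc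
  push_neg at hc
  obtain ⟨hxW, hyW⟩ := hc
  obtain ⟨w, hwW, hsr⟩ := hW x y hxy
  have key : ∀ a b : V, a ≠ b → MaximallyDistantFrom G a b → w ≠ a →
      ¬ LiesBetween G w a b := by
    intro a b hab hmd hwa hlb
    obtain ⟨z, hadj, hz⟩ := exists_adj_dist_aux G hG (Ne.symm hwa)
    have h1 : G.dist z b ≤ G.dist a b := hmd z hadj
    have h2 : G.dist w b ≤ G.dist w z + G.dist z b := hG.dist_triangle
    rw [SimpleGraph.dist_comm (u := a) (v := w)] at hz
    rw [SimpleGraph.dist_comm (u := w) (v := z)] at h2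
    unfold LiesBetween at hlb
    have hd : G.dist w b ≠ 0 := by
      intro h0
      have := (hG.dist_eq_zero_iff).mp h0
      subst this
      have : G.dist w a = 0 := by omega
      exact hwa (((hG.dist_eq_zero_iff).mp this))
    omega
  rcases hsr with hl | hl
  · exact key x y hxy h.1 (fun e => hxW (e ▸ hwW)) hl
  · exact key y x hxy.symm h.2 (fun e => hyW (e ▸ hwW)) hl
end

section
/- For a connected graph G of order n ≥ 2, sdim(G) = 1 if and only if G is a path P_n. -/
open SimpleGraph

private lemma walk_nat_dist_le {n : ℕ} {i j : Fin n} (p : (pathGraph n).Walk i j) :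
    Nat.dist i.val j.val ≤ p.length := by
  induction p with
  | nil => simp [Nat.dist_self]
  | @cons a b c h q ih =>
    have hab : Nat.dist a.val b.val = 1 := by
      rcases pathGraph_adj.mp h with h1 | h1 <;> simp [Nat.dist] <;> omega
    calc Nat.dist a.val c.val ≤ Nat.dist a.val b.val + Nat.dist b.val c.val :=
          Nat.dist.triangle_inequality _ _ _
      _ ≤ 1 + q.length := by omega
      _ = (SimpleGraph.Walk.cons h q).length := by simp [SimpleGraph.Walk.length_cons]; omega

private lemma pathGraph_exists_walk {n : ℕ} (k : ℕ) :
    ∀ i j : Fin n, i.val + k = j.val → ∃ p : (pathGraph n).Walk i j, p.length = k := by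
  induction k with
  | zero =>
    intro i j h
    have : i = j := Fin.ext (by omega)
    subst this
    exact ⟨SimpleGraph.Walk.nil, rfl⟩
  | succ k ih =>
    intro i j h
    have hi1 : i.val + 1 < n := by omega
    obtain ⟨p, hp⟩ := ih ⟨i.val + 1, hi1⟩ j (by simp; omega)
    have hadj : (pathGraph n).Adj i ⟨i.val + 1, hi1⟩ := pathGraph_adj.mpr (Or.inl rfl)
    exact ⟨SimpleGraph.Walk.cons hadj p, by simp [hp]⟩

private lemma pathGraph_dist {n : ℕ} (i j : Fin n) :
    (pathGraph n).dist i j = Nat.dist i.val j.val := by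
  have hle : (pathGraph n).dist i j ≤ Nat.dist i.val j.val := by
    rcases le_total i.val j.val with h | h
    · obtain ⟨p, hp⟩ := pathGraph_exists_walk (j.val - i.val) i j (by omega)
      calc (pathGraph n).dist i j ≤ p.length := SimpleGraph.dist_le p
        _ = Nat.dist i.val j.val := by simp [hp, Nat.dist]; omega
    · obtain ⟨p, hp⟩ := pathGraph_exists_walk (i.val - j.val) j i (by omega)
      rw [SimpleGraph.dist_comm]
      calc (pathGraph n).dist j i ≤ p.length := SimpleGraph.dist_le p
        _ = Nat.dist i.val j.val := by simp [hp, Nat.dist]; omega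
  refine le_antisymm hle ?_
  have hr : (pathGraph n).Reachable i j := by
    rcases le_total i.val j.val with h | h
    · obtain ⟨p, _⟩ := pathGraph_exists_walk (j.val - i.val) i j (by omega); exact ⟨p⟩
    · obtain ⟨p, _⟩ := pathGraph_exists_walk (i.val - j.val) j i (by omega); exact Reachable.symm ⟨p⟩
  obtain ⟨p, hp⟩ := hr.exists_walk_length_eq_dist
  rw [← hp]
  exact walk_nat_dist_le p

private lemma hom_dist_le {V W : Type*} {G : SimpleGraph V} {G' : SimpleGraph W}
    (f : G →g G') {u v : V} (hr : G.Reachable u v) :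
    G'.dist (f u) (f v) ≤ G.dist u v := by
  obtain ⟨p, hp⟩ := hr.exists_walk_length_eq_dist
  calc G'.dist (f u) (f v) ≤ (p.map f).length := SimpleGraph.dist_le _
    _ = p.length := SimpleGraph.Walk.length_map _ _
    _ = G.dist u v := hp

private lemma iso_dist {V W : Type*} {G : SimpleGraph V} {G' : SimpleGraph W}
    (f : G ≃g G') (hG : G.Connected) (u v : V) :
    G'.dist (f u) (f v) = G.dist u v := by
  have h1 := hom_dist_le f.toHom (hG u v)
  have h2 := hom_dist_le f.symm.toHom ((hG u v).map f.toHom)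
  have h2' : G.dist u v ≤ G'.dist (f u) (f v) := by
    have e1 : f.symm.toHom (f.toHom u) = u := f.symm_apply_apply u
    have e2 : f.symm.toHom (f.toHom v) = v := f.symm_apply_apply v
    rwa [e1, e2] at h2
  exact le_antisymm h1 h2'

/-- For a connected graph of order `n ≥ 2`, `sdim(G) = 1` iff `G` is the path `P_n`. -/
theorem sdim_eq_one_iff_path {V : Type*} [Fintype V]
    (G : SimpleGraph V) (hG : G.Connected) (h2 : 2 ≤ Fintype.card V) :
    sdim G = 1 ↔ Nonempty (G ≃g pathGraph (Fintype.card V)) := by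
  set n := Fintype.card V with hn
  constructor
  · intro h
    unfold sdim at h
    have hSne : {k | ∃ W : Set V, W.ncard = k ∧ IsStrongResolvingSet G W}.Nonempty := by
      by_contra hc
      rw [Set.not_nonempty_iff_eq_empty] at hc
      rw [hc, Nat.sInf_empty] at h
      omega
    have hmem := Nat.sInf_mem hSne
    rw [h] at hmem
    obtain ⟨W, hW1, hWres⟩ := hmem
    obtain ⟨x, rfl⟩ := Set.ncard_eq_one.mp hW1
    have hx : ∀ u v : V, u ≠ v → StronglyResolves G x u v := by
      intro u v huv
      obtain ⟨y, hy, hres⟩ := hWres u v huv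
      rw [Set.mem_singleton_iff] at hy; subst hy; exact hres
    have hinj : ∀ u v : V, G.dist x u = G.dist x v → u = v := by
      intro u v hd
      by_contra huv
      rcases hx u v huv with h1 | h1 <;> unfold LiesBetween at h1
      · have : G.dist u v = 0 := by omega
        exact huv ((hG.dist_eq_zero_iff).mp this)
      · have : G.dist v u = 0 := by omega
        exact huv ((hG.dist_eq_zero_iff).mp this).symm
    have hlt : ∀ v : V, G.dist x v < n := by
      intro v
      obtain ⟨p, hp, hlen⟩ := hG.exists_path_of_dist x v
      rw [← hlen]
      exact hp.length_lt
    let f : V → Fin n := fun v => ⟨G.dist x v, hlt v⟩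
    have hfinj : Function.Injective f := by
      intro u v huv
      exact hinj u v (by simpa [f] using congrArg Fin.val huv)
    have hfbij : Function.Bijective f :=
      (Fintype.bijective_iff_injective_and_card f).mpr ⟨hfinj, by simp [hn]⟩
    have key : ∀ u v : V,
        G.Adj u v ↔ (G.dist x u + 1 = G.dist x v ∨ G.dist x v + 1 = G.dist x u) := by
      intro u v
      constructor
      · intro ha
        have hd1 : G.dist u v = 1 := (SimpleGraph.dist_eq_one_iff_adj).mpr ha
        have hd1' : G.dist v u = 1 := by rwa [SimpleGraph.dist_comm] at hd1
        have t1 := hG.dist_triangle (u := x) (v := u) (w := v)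
        have t2 := hG.dist_triangle (u := x) (v := v) (w := u)
        have hne : G.dist x u ≠ G.dist x v := fun hh => ha.ne (hinj u v hh)
        omega
      · intro hd
        have huv : u ≠ v := by
          intro hvu; subst hvu; omega
        have hc : G.dist x u + G.dist u v = G.dist x v ∨
            G.dist x v + G.dist u v = G.dist x u := by
          rcases hx u v huv with h1 | h1 <;> unfold LiesBetween at h1
          · exact Or.inl h1
          · right; rwa [SimpleGraph.dist_comm (u := v) (v := u)] at h1
        have : G.dist u v = 1 := by omega
        exact SimpleGraph.dist_eq_one_iff_adj.mp this
    refine ⟨⟨Equiv.ofBijective f hfbij, ?_⟩⟩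
    intro u v
    show (pathGraph n).Adj (f u) (f v) ↔ G.Adj u v
    rw [pathGraph_adj, key u v]
  · rintro ⟨f⟩
    have hn0 : 0 < n := by omega
    set x := f.symm ⟨0, hn0⟩ with hxdef
    have hfx : (f x).val = 0 := by
      rw [hxdef]
      simp
    have hdist : ∀ u v : V, G.dist u v = Nat.dist (f u).val (f v).val := by
      intro u v
      rw [← iso_dist f hG u v, pathGraph_dist]
    have hres : IsStrongResolvingSet G {x} := by
      intro u v huv
      refine ⟨x, Set.mem_singleton x, ?_⟩
      have hne : (f u).val ≠ (f v).val := by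
        intro hh
        exact huv (f.toEquiv.injective (Fin.ext hh))
      unfold StronglyResolves LiesBetween
      rw [hdist x u, hdist u v, hdist x v, hdist v u, hfx]
      simp only [Nat.dist]
      omega
    have h1mem : 1 ∈ {k | ∃ W : Set V, W.ncard = k ∧ IsStrongResolvingSet G W} :=
      ⟨{x}, Set.ncard_singleton x, hres⟩
    have hlb : ∀ m ∈ {k | ∃ W : Set V, W.ncard = k ∧ IsStrongResolvingSet G W}, 1 ≤ m := by
      rintro m ⟨W, hWm, hWres⟩
      by_contra hm
      have hm0 : m = 0 := by omega
      subst hm0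
      have hWe : W = ∅ := (Set.ncard_eq_zero (Set.toFinite W)).mp hWm
      obtain ⟨u, v, huv⟩ := Fintype.exists_pair_of_one_lt_card (by omega : 1 < Fintype.card V)
      obtain ⟨y, hy, _⟩ := hWres u v huv
      simp [hWe] at hy
    unfold sdim
    exact le_antisymm (Nat.sInf_le h1mem) (le_csInf ⟨1, h1mem⟩ hlb)
end
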